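/- arXiv:2604.01998 — 3 statements merged into one kernel-verified Lean document; each statement's English description precedes it below -/
import Mathlib

section
/- If u and v both solve the problem −Δ[φ(Δu(n-1))] + u(n) = h(n) for n ∈ ℤ[1,T] together with the boundary condition (φ(Δu(0)), −φ(Δu(T))) ∈ γ(u(0), u(T+1)), then u = v. (Uniqueness of solutions.) -/
/-- Uniqueness of solutions of the problem
−Δ[φ(Δu(n-1))] + u(n) = h(n), (φ(Δu(0)), −φ(Δu(T))) ∈ γ(u(0), u(T+1)),
when φ is strictly monotone on the ball B_a and γ is a monotone set-valued operator. -/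
theorem uniqueness_Q_gamma (N T : ℕ) (hN : 1 ≤ N) (hT : 1 ≤ T) (a : ℝ) (ha : 0 < a)
    (φ : EuclideanSpace ℝ (Fin N) → EuclideanSpace ℝ (Fin N))
    (hφ : ∀ x y : EuclideanSpace ℝ (Fin N), ‖x‖ < a → ‖y‖ < a → x ≠ y →
      (0 : ℝ) < inner ℝ (φ x - φ y) (x - y))
    (γ : EuclideanSpace ℝ (Fin N) × EuclideanSpace ℝ (Fin N) →
      Set (EuclideanSpace ℝ (Fin N) × EuclideanSpace ℝ (Fin N)))
    (hγ : ∀ z w p q, p ∈ γ z → q ∈ γ w →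
      (0 : ℝ) ≤ inner ℝ (p.1 - q.1) (z.1 - w.1) + inner ℝ (p.2 - q.2) (z.2 - w.2))
    (h : ℕ → EuclideanSpace ℝ (Fin N))
    (u v : ℕ → EuclideanSpace ℝ (Fin N))
    (hu1 : ∀ n ∈ Finset.Icc 1 (T + 1), ‖u n - u (n - 1)‖ < a)
    (hu2 : ∀ n ∈ Finset.Icc 1 T,
      -((φ (u (n + 1) - u n)) - (φ (u n - u (n - 1)))) + u n = h n)
    (hu3 : (φ (u 1 - u 0), -φ (u (T + 1) - u T)) ∈ γ (u 0, u (T + 1)))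
    (hv1 : ∀ n ∈ Finset.Icc 1 (T + 1), ‖v n - v (n - 1)‖ < a)
    (hv2 : ∀ n ∈ Finset.Icc 1 T,
      -((φ (v (n + 1) - v n)) - (φ (v n - v (n - 1)))) + v n = h n)
    (hv3 : (φ (v 1 - v 0), -φ (v (T + 1) - v T)) ∈ γ (v 0, v (T + 1))) :
    ∀ n ≤ T + 1, u n = v n := by
  classical
  -- the difference of the nonlinear fluxes
  set g : ℕ → EuclideanSpace ℝ (Fin N) :=
    fun n => φ (u (n + 1) - u n) - φ (v (n + 1) - v n) with hg
  -- discrete equation for the difference w = u - v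
  have heq : ∀ n, 1 ≤ n → n ≤ T → u n - v n = g n - g (n - 1) := by
    intro n h1 h2
    have hmem : n ∈ Finset.Icc 1 T := Finset.mem_Icc.mpr ⟨h1, h2⟩
    have hu := hu2 n hmem
    have hv := hv2 n hmem
    have hsucc : n - 1 + 1 = n := Nat.succ_pred_eq_of_pos h1
    have h3 : -((φ (u (n + 1) - u n)) - (φ (u n - u (n - 1)))) + u n
        = -((φ (v (n + 1) - v n)) - (φ (v n - v (n - 1)))) + v n := hu.trans hv.symm
    have h4 : u n - v n -
        ((φ (u (n + 1) - u n) - φ (v (n + 1) - v n)) -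
          (φ (u n - u (n - 1)) - φ (v n - v (n - 1))))
        = (-((φ (u (n + 1) - u n)) - (φ (u n - u (n - 1)))) + u n)
          - (-((φ (v (n + 1) - v n)) - (φ (v n - v (n - 1)))) + v n) := by abel
    rw [h3, sub_self] at h4
    have h5 := sub_eq_zero.mp h4
    simp only [hg, hsucc]
    exact h5
  -- real quantities
  set P : ℕ → ℝ :=
    fun n => (inner ℝ (g n) ((u (n + 1) - u n) - (v (n + 1) - v n)) : ℝ) with hP
  set Q : ℕ → ℝ := fun n => ‖u n - v n‖ ^ 2 with hQ
  set F : ℕ → ℝ := fun n => (inner ℝ (g n) (u (n + 1) - v (n + 1)) : ℝ) with hF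
  -- P is nonnegative, and zero only when the increments agree
  have hPpos : ∀ n ≤ T, (u (n + 1) - u n) ≠ (v (n + 1) - v n) → 0 < P n := by
    intro n hn hne
    have hbu : ‖u (n + 1) - u n‖ < a := by
      have := hu1 (n + 1) (Finset.mem_Icc.mpr ⟨Nat.le_add_left 1 n, by omega⟩)
      simpa using this
    have hbv : ‖v (n + 1) - v n‖ < a := by
      have := hv1 (n + 1) (Finset.mem_Icc.mpr ⟨Nat.le_add_left 1 n, by omega⟩)
      simpa using this
    exact hφ _ _ hbu hbv hne
  have hPnn : ∀ n ≤ T, 0 ≤ P n := by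
    intro n hn
    by_cases hne : (u (n + 1) - u n) = (v (n + 1) - v n)
    · simp [hP, hg, hne]
    · exact (hPpos n hn hne).le
  -- telescoping step
  have step : ∀ n ∈ Finset.range T, F (n + 1) - F n = P (n + 1) + Q (n + 1) := by
    intro n hn
    have hn' : n + 1 ≤ T := Finset.mem_range.mp hn
    have hw : u (n + 1) - v (n + 1) = g (n + 1) - g n := by
      have := heq (n + 1) (Nat.le_add_left 1 n) hn'
      simpa using this
    have hPr : P (n + 1)
        = (inner ℝ (g (n + 1)) ((u (n + 2) - v (n + 2)) - (u (n + 1) - v (n + 1))) : ℝ) := by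
      simp only [hP]
      congr 1
      abel
    have hQr : Q (n + 1) = (inner ℝ (g (n + 1) - g n) (u (n + 1) - v (n + 1)) : ℝ) := by
      rw [hQ]
      simp only [← hw, real_inner_self_eq_norm_sq]
    simp only [hF, hPr, hQr, inner_sub_left, inner_sub_right]
    ring
  have tele : F T - F 0 = ∑ n ∈ Finset.range T, (P (n + 1) + Q (n + 1)) := by
    rw [← Finset.sum_range_sub F T]
    exact Finset.sum_congr rfl step
  have hF0 : F 0 = P 0 + (inner ℝ (g 0) (u 0 - v 0) : ℝ) := by
    have : (u 1 - u 0) - (v 1 - v 0) = (u 1 - v 1) - (u 0 - v 0) := by abel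
    simp only [hF, hP, this, inner_sub_right]
    ring
  -- boundary monotonicity
  have hbd : F T - (inner ℝ (g 0) (u 0 - v 0) : ℝ) ≤ 0 := by
    have := hγ (u 0, u (T + 1)) (v 0, v (T + 1)) _ _ hu3 hv3
    simp only [hF, hg] at *
    have h2 : (inner ℝ (-φ (u (T + 1) - u T) - -φ (v (T + 1) - v T)) (u (T + 1) - v (T + 1)) : ℝ)
        = -(inner ℝ (φ (u (T + 1) - u T) - φ (v (T + 1) - v T)) (u (T + 1) - v (T + 1)) : ℝ) := by
      rw [← inner_neg_left]
      congr 1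
      abel
    simp only [h2] at this
    linarith
  -- total sum is nonpositive and termwise nonnegative
  have hsum : P 0 + ∑ n ∈ Finset.range T, (P (n + 1) + Q (n + 1)) ≤ 0 := by
    have : F T - (inner ℝ (g 0) (u 0 - v 0) : ℝ)
        = P 0 + ∑ n ∈ Finset.range T, (P (n + 1) + Q (n + 1)) := by
      rw [← tele, hF0]; ring
    linarith [hbd, this]
  have hterm_nn : ∀ n ∈ Finset.range T, 0 ≤ P (n + 1) + Q (n + 1) := by
    intro n hn
    have hn' : n + 1 ≤ T := Finset.mem_range.mp hn
    have := hPnn (n + 1) hn'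
    have hq : (0 : ℝ) ≤ Q (n + 1) := by positivity
    linarith
  have hsum_nn : 0 ≤ ∑ n ∈ Finset.range T, (P (n + 1) + Q (n + 1)) :=
    Finset.sum_nonneg hterm_nn
  have hP0nn : 0 ≤ P 0 := hPnn 0 (by omega)
  have hP0 : P 0 = 0 := le_antisymm (by linarith) hP0nn
  have hsum0 : ∑ n ∈ Finset.range T, (P (n + 1) + Q (n + 1)) = 0 :=
    le_antisymm (by linarith) hsum_nn
  have hterm0 : ∀ n ∈ Finset.range T, P (n + 1) + Q (n + 1) = 0 :=
    (Finset.sum_eq_zero_iff_of_nonneg hterm_nn).mp hsum0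
  -- increments agree for n ≤ T
  have hinc : ∀ n ≤ T, u (n + 1) - u n = v (n + 1) - v n := by
    intro n hn
    by_contra hne
    have hpos := hPpos n hn hne
    rcases Nat.eq_zero_or_pos n with h0 | h1
    · subst h0; linarith
    · have hn' : n - 1 ∈ Finset.range T := Finset.mem_range.mpr (by omega)
      have := hterm0 (n - 1) hn'
      have hsucc : n - 1 + 1 = n := Nat.succ_pred_eq_of_pos h1
      rw [hsucc] at this
      have hq : (0 : ℝ) ≤ Q n := by simp only [hQ]; positivity
      linarith
  -- u = v on [1, T]
  have hmid : ∀ n, 1 ≤ n → n ≤ T → u n = v n := by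
    intro n h1 h2
    have hn' : n - 1 ∈ Finset.range T := Finset.mem_range.mpr (by omega)
    have := hterm0 (n - 1) hn'
    have hsucc : n - 1 + 1 = n := Nat.succ_pred_eq_of_pos h1
    rw [hsucc] at this
    have hp := hPnn n h2
    have hq0 : (0:ℝ) ≤ Q n := by simp only [hQ]; positivity
    have hq : Q n = 0 := by linarith
    have : ‖u n - v n‖ = 0 := by
      have := hq
      simp only [hQ] at this
      nlinarith [norm_nonneg (u n - v n)]
    have := norm_eq_zero.mp this
    exact sub_eq_zero.mp this
  intro n hn
  rcases Nat.eq_zero_or_pos n with h0 | h1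
  · subst h0
    have h1 : u 1 = v 1 := hmid 1 le_rfl hT
    have h2 := hinc 0 (Nat.zero_le T)
    simp only [zero_add] at h2
    rw [h1] at h2
    have := sub_right_injective h2
    exact this
  · rcases Nat.lt_or_ge n (T + 1) with hlt | hge
    · exact hmid n h1 (by omega)
    · have hn1 : n = T + 1 := by omega
      subst hn1
      have hTT : u T = v T := hmid T hT le_rfl
      have h2 := hinc T le_rfl
      rw [hTT] at h2
      have : u (T + 1) - v T = v (T + 1) - v T := h2
      exact sub_left_injective this
end

section
/- If u solves the problem with data h and v solves the problem with data l (same φ, same monotone γ), then M(u,v) + ω(u,v) + ‖u − v‖_T² = ∑_{n=1}^{T} ⟨h(n) − l(n), u(n) − v(n)⟩ ≤ √T · |h − l|_∞ · ‖u − v‖_T, where ‖w‖_T² = ∑_{n=1}^T |w(n)|², |ξ|_∞ = max_{n∈[1,T]} |ξ(n)|, and M, ω are as in the fundamental identity. -/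
open Finset

private lemma abel_ident {E : Type*} [NormedAddCommGroup E] [InnerProductSpace ℝ E]
    (ψ w : ℕ → E) (T : ℕ) :
    ∑ n ∈ Finset.Icc 1 (T + 1), (inner ℝ (ψ n) (w n - w (n - 1)) : ℝ)
      + ((inner ℝ (ψ 1) (w 0) : ℝ) - (inner ℝ (ψ (T + 1)) (w (T + 1)) : ℝ))
      = ∑ n ∈ Finset.Icc 1 T, (inner ℝ (ψ n - ψ (n + 1)) (w n) : ℝ) := by
  induction T with
  | zero =>
      simp [inner_sub_right]
  | succ T ih =>
      rw [Finset.sum_Icc_succ_top (by omega : 1 ≤ T + 1 + 1)]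
      conv_rhs => rw [Finset.sum_Icc_succ_top (by omega : 1 ≤ T + 1)]
      rw [← ih]
      simp only [Nat.add_sub_cancel]
      simp [inner_sub_right, inner_sub_left]
      ring

/-- If u solves the problem with data h and v solves it with data l (same φ, same monotone γ),
then M(u,v) + ω(u,v) + ‖u−v‖_T² = ∑⟨h−l, u−v⟩ ≤ √T · |h−l|_∞ · ‖u−v‖_T. -/
theorem basic_estimate (N T : ℕ) (hN : 1 ≤ N) (hT : 1 ≤ T) (a : ℝ) (ha : 0 < a)
    (φ : EuclideanSpace ℝ (Fin N) → EuclideanSpace ℝ (Fin N))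
    (γ : EuclideanSpace ℝ (Fin N) × EuclideanSpace ℝ (Fin N) →
      Set (EuclideanSpace ℝ (Fin N) × EuclideanSpace ℝ (Fin N)))
    (hγ : ∀ z w p q, p ∈ γ z → q ∈ γ w →
      (0 : ℝ) ≤ inner ℝ (p.1 - q.1) (z.1 - w.1) + inner ℝ (p.2 - q.2) (z.2 - w.2))
    (h l : ℕ → EuclideanSpace ℝ (Fin N))
    (u v : ℕ → EuclideanSpace ℝ (Fin N))
    (hu1 : ∀ n ∈ Finset.Icc 1 (T + 1), ‖u n - u (n - 1)‖ < a)
    (hu2 : ∀ n ∈ Finset.Icc 1 T,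
      -((φ (u (n + 1) - u n)) - (φ (u n - u (n - 1)))) + u n = h n)
    (hu3 : (φ (u 1 - u 0), -φ (u (T + 1) - u T)) ∈ γ (u 0, u (T + 1)))
    (hv1 : ∀ n ∈ Finset.Icc 1 (T + 1), ‖v n - v (n - 1)‖ < a)
    (hv2 : ∀ n ∈ Finset.Icc 1 T,
      -((φ (v (n + 1) - v n)) - (φ (v n - v (n - 1)))) + v n = l n)
    (hv3 : (φ (v 1 - v 0), -φ (v (T + 1) - v T)) ∈ γ (v 0, v (T + 1))) :
    (∑ n ∈ Finset.Icc 1 (T + 1),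
        (inner ℝ (φ (u n - u (n - 1)) - φ (v n - v (n - 1)))
          ((u n - u (n - 1)) - (v n - v (n - 1))) : ℝ))
      + ((inner ℝ (φ (u 1 - u 0) - φ (v 1 - v 0)) (u 0 - v 0) : ℝ)
          - (inner ℝ (φ (u (T + 1) - u T) - φ (v (T + 1) - v T)) (u (T + 1) - v (T + 1)) : ℝ))
      + ∑ n ∈ Finset.Icc 1 T, ‖u n - v n‖ ^ 2
      = ∑ n ∈ Finset.Icc 1 T, (inner ℝ (h n - l n) (u n - v n) : ℝ)
    ∧ ∑ n ∈ Finset.Icc 1 T, (inner ℝ (h n - l n) (u n - v n) : ℝ)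
      ≤ Real.sqrt T *
        ((Finset.Icc 1 T).sup' (Finset.nonempty_Icc.mpr hT) (fun n => ‖h n - l n‖)) *
        Real.sqrt (∑ n ∈ Finset.Icc 1 T, ‖u n - v n‖ ^ 2) := by
  set ψ : ℕ → EuclideanSpace ℝ (Fin N) :=
    fun n => φ (u n - u (n - 1)) - φ (v n - v (n - 1)) with hψ
  set w : ℕ → EuclideanSpace ℝ (Fin N) := fun n => u n - v n with hw
  constructor
  · -- identity
    have hM : (∑ n ∈ Finset.Icc 1 (T + 1),
        (inner ℝ (φ (u n - u (n - 1)) - φ (v n - v (n - 1)))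
          ((u n - u (n - 1)) - (v n - v (n - 1))) : ℝ))
        = ∑ n ∈ Finset.Icc 1 (T + 1), (inner ℝ (ψ n) (w n - w (n - 1)) : ℝ) := by
      refine Finset.sum_congr rfl fun n _ => ?_
      have : (u n - u (n - 1)) - (v n - v (n - 1)) = w n - w (n - 1) := by
        simp [hw]; abel
      rw [this]
    have key := abel_ident ψ w T
    have hsum : ∀ n ∈ Finset.Icc 1 T,
        (inner ℝ (h n - l n) (w n) : ℝ) = (inner ℝ (ψ n - ψ (n + 1)) (w n) : ℝ) + ‖w n‖ ^ 2 := by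
      intro n hn
      have e1 := hu2 n hn
      have e2 := hv2 n hn
      have hd : h n - l n = (ψ n - ψ (n + 1)) + w n := by
        rw [← e1, ← e2]
        simp only [hψ, hw, Nat.add_sub_cancel]
        abel
      rw [hd, inner_add_left, real_inner_self_eq_norm_sq]
    rw [hM, Finset.sum_congr rfl hsum, Finset.sum_add_distrib, ← key]
    simp only [hψ, hw, Nat.add_sub_cancel, Nat.add_sub_cancel_left]
  · -- estimate
    set C := (Finset.Icc 1 T).sup' (Finset.nonempty_Icc.mpr hT) (fun n => ‖h n - l n‖) with hC
    have hC0 : 0 ≤ C := le_trans (norm_nonneg _)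
      (Finset.le_sup' (fun n => ‖h n - l n‖) (Finset.mem_Icc.mpr ⟨le_refl 1, hT⟩))
    have h1 : ∑ n ∈ Finset.Icc 1 T, (inner ℝ (h n - l n) (u n - v n) : ℝ)
        ≤ ∑ n ∈ Finset.Icc 1 T, C * ‖u n - v n‖ := by
      refine Finset.sum_le_sum fun n hn => ?_
      calc (inner ℝ (h n - l n) (u n - v n) : ℝ)
          ≤ ‖h n - l n‖ * ‖u n - v n‖ := real_inner_le_norm _ _
        _ ≤ C * ‖u n - v n‖ := by
            apply mul_le_mul_of_nonneg_right _ (norm_nonneg _)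
            exact Finset.le_sup' (fun n => ‖h n - l n‖) hn
    rw [← Finset.mul_sum] at h1
    have h2 : ∑ n ∈ Finset.Icc 1 T, ‖u n - v n‖
        ≤ Real.sqrt T * Real.sqrt (∑ n ∈ Finset.Icc 1 T, ‖u n - v n‖ ^ 2) := by
      have hcs := sq_sum_le_card_mul_sum_sq (s := Finset.Icc 1 T)
        (f := fun n => ‖u n - v n‖)
      have hcard : (#(Finset.Icc 1 T) : ℝ) = (T : ℝ) := by
        simp [Nat.card_Icc]
      rw [hcard] at hcs
      have := Real.sqrt_le_sqrt hcs
      rwa [Real.sqrt_sq (Finset.sum_nonneg fun n _ => norm_nonneg _),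
        Real.sqrt_mul (by positivity)] at this
    calc ∑ n ∈ Finset.Icc 1 T, (inner ℝ (h n - l n) (u n - v n) : ℝ)
        ≤ C * ∑ n ∈ Finset.Icc 1 T, ‖u n - v n‖ := h1
      _ ≤ C * (Real.sqrt T * Real.sqrt (∑ n ∈ Finset.Icc 1 T, ‖u n - v n‖ ^ 2)) :=
          mul_le_mul_of_nonneg_left h2 hC0
      _ = Real.sqrt T * C * Real.sqrt (∑ n ∈ Finset.Icc 1 T, ‖u n - v n‖ ^ 2) := by ring
end

section
/- Any w : ℤ[0,T+1] → ℝ^N with max_{n∈[1,T+1]} |Δw(n-1)| ≤ a satisfies |w(m)| ≤ ‖w‖_T / √T + T·a for every m ∈ ℤ[0,T+1], where ‖w‖_T = (∑_{j=1}^{T} |w(j)|²)^{1/2}. -/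
/-- Any w : ℤ[0,T+1] → ℝ^N with |Δw(n-1)| ≤ a for n ∈ ℤ[1,T+1] satisfies
|w(m)| ≤ ‖w‖_T/√T + T·a for all m ∈ ℤ[0,T+1]. -/
theorem pointwise_estimate (N T : ℕ) (hN : 1 ≤ N) (hT : 1 ≤ T) (a : ℝ) (ha : 0 < a)
    (w : ℕ → EuclideanSpace ℝ (Fin N))
    (hw : ∀ n ∈ Finset.Icc 1 (T + 1), ‖w n - w (n - 1)‖ ≤ a)
    (m : ℕ) (hm : m ≤ T + 1) :
    ‖w m‖ ≤ Real.sqrt (∑ j ∈ Finset.Icc 1 T, ‖w j‖ ^ 2) / Real.sqrt T + T * a := by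
  set S := ∑ j ∈ Finset.Icc 1 T, ‖w j‖ ^ 2 with hS
  -- telescoping bound
  have key : ∀ l k : ℕ, k ≤ l → l ≤ T + 1 → ‖w l - w k‖ ≤ (l - k : ℕ) * a := by
    intro l
    induction l with
    | zero => intro k hk _; interval_cases k; simp [ha.le]
    | succ l ih =>
      intro k hk hl
      rcases Nat.eq_or_lt_of_le hk with rfl | hk'
      · simp [ha.le]
      · have hkl : k ≤ l := Nat.lt_succ_iff.mp hk'
        have h1 : ‖w (l + 1) - w l‖ ≤ a := by
          have := hw (l + 1) (Finset.mem_Icc.mpr ⟨Nat.le_add_left 1 l, hl⟩)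
          simpa using this
        have h2 := ih k hkl (le_trans (Nat.le_succ l) hl)
        have h3 : ‖w (l + 1) - w k‖ ≤ ‖w (l + 1) - w l‖ + ‖w l - w k‖ := by
          simpa using norm_sub_le_norm_sub_add_norm_sub (w (l+1)) (w l) (w k)
        have hcast : ((l + 1 - k : ℕ) : ℝ) = (l - k : ℕ) + 1 := by
          push_cast [Nat.succ_sub hkl]; ring
        calc ‖w (l + 1) - w k‖ ≤ a + (l - k : ℕ) * a := by linarith
          _ = ((l + 1 - k : ℕ) : ℝ) * a := by rw [hcast]; ring
  -- pick minimizer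
  obtain ⟨j, hjmem, hjmin⟩ := Finset.exists_min_image (Finset.Icc 1 T) (fun i => ‖w i‖)
    ⟨1, Finset.mem_Icc.mpr ⟨le_refl 1, hT⟩⟩
  obtain ⟨hj1, hjT⟩ := Finset.mem_Icc.mp hjmem
  have hTpos : (0:ℝ) < T := by exact_mod_cast Nat.lt_of_lt_of_le Nat.zero_lt_one hT
  have hmin : (T : ℝ) * ‖w j‖ ^ 2 ≤ S := by
    have : ∀ i ∈ Finset.Icc 1 T, ‖w j‖ ^ 2 ≤ ‖w i‖ ^ 2 := fun i hi =>
      pow_le_pow_left₀ (norm_nonneg _) (hjmin i hi) 2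
    calc (T : ℝ) * ‖w j‖ ^ 2 = (Finset.Icc 1 T).card • ‖w j‖ ^ 2 := by
          simp [Nat.card_Icc, nsmul_eq_mul]
      _ ≤ S := Finset.card_nsmul_le_sum _ _ _ this
  have hwj : ‖w j‖ ≤ Real.sqrt S / Real.sqrt T := by
    have hSnn : 0 ≤ S := by positivity
    have h2 : ‖w j‖ ^ 2 ≤ S / T := (le_div_iff₀ hTpos).mpr (by linarith)
    calc ‖w j‖ = Real.sqrt (‖w j‖ ^ 2) := (Real.sqrt_sq (norm_nonneg _)).symm
      _ ≤ Real.sqrt (S / T) := Real.sqrt_le_sqrt h2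
      _ = Real.sqrt S / Real.sqrt T := Real.sqrt_div hSnn T
  have hdist : ‖w m - w j‖ ≤ (T : ℝ) * a := by
    rcases le_total j m with h | h
    · have := key m j h hm
      have hle : m - j ≤ T := by omega
      calc ‖w m - w j‖ ≤ (m - j : ℕ) * a := this
        _ ≤ (T : ℝ) * a := by
          apply mul_le_mul_of_nonneg_right _ ha.le
          exact_mod_cast hle
    · have := key j m h (le_trans hjT (Nat.le_succ T))
      have hle : j - m ≤ T := by omega
      calc ‖w m - w j‖ = ‖w j - w m‖ := by rw [norm_sub_rev]
        _ ≤ (j - m : ℕ) * a := this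
        _ ≤ (T : ℝ) * a := by
          apply mul_le_mul_of_nonneg_right _ ha.le
          exact_mod_cast hle
  calc ‖w m‖ ≤ ‖w j‖ + ‖w m - w j‖ := by
        have := norm_add_le (w j) (w m - w j); simpa using this
    _ ≤ Real.sqrt S / Real.sqrt T + (T : ℝ) * a := add_le_add hwj hdist
end
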